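/- Let M ⊆ B(H,K) be a TRO and B ⊆ B(K) a norm-closed subalgebra. Define A = closure(span(M* B M)) ⊆ B(H). If B = closure(span(M M* B M M*)), then A is a norm-closed subalgebra of B(H), i.e., A A ⊆ A. -/
import Mathlib


open ContinuousLinearMap

noncomputable section

/-- Norm closure of the linear span of a set of operators. -/
def csp {E : Type*} [NormedAddCommGroup E] [NormedSpace ℂ E] (S : Set E) : Set E :=
  closure (Submodule.span ℂ S : Set E)

set_option maxHeartbeats 1000000 in
/-- Let `M ⊆ B(H,K)` be a TRO and `B ⊆ B(K)` a norm-closed subalgebra with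
`B = closure span (M M* B M M*)`. Then `A = closure span (M* B M)` is closed under
multiplication, hence a norm-closed subalgebra of `B(H)`. -/
theorem stmt6 {H K : Type*}
    [NormedAddCommGroup H] [InnerProductSpace ℂ H] [CompleteSpace H]
    [NormedAddCommGroup K] [InnerProductSpace ℂ K] [CompleteSpace K]
    (M : Submodule ℂ (H →L[ℂ] K)) (hMclosed : IsClosed (M : Set (H →L[ℂ] K)))
    (hTRO : ∀ m ∈ M, ∀ n ∈ M, ∀ l ∈ M, m ∘L (adjoint n) ∘L l ∈ M)
    (B : Submodule ℂ (K →L[ℂ] K)) (hBclosed : IsClosed (B : Set (K →L[ℂ] K)))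
    (hBmul : ∀ a ∈ B, ∀ b ∈ B, a ∘L b ∈ B)
    (hB : (B : Set (K →L[ℂ] K)) = csp {T | ∃ m ∈ M, ∃ n ∈ M, ∃ b ∈ B, ∃ k ∈ M, ∃ l ∈ M,
      T = m ∘L (adjoint n) ∘L b ∘L k ∘L (adjoint l)}) :
    ∀ a₁ ∈ csp {T : H →L[ℂ] H | ∃ m ∈ M, ∃ b ∈ B, ∃ n ∈ M, T = (adjoint m) ∘L b ∘L n},
      ∀ a₂ ∈ csp {T : H →L[ℂ] H | ∃ m ∈ M, ∃ b ∈ B, ∃ n ∈ M, T = (adjoint m) ∘L b ∘L n},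
        a₁ ∘L a₂ ∈
          csp {T : H →L[ℂ] H | ∃ m ∈ M, ∃ b ∈ B, ∃ n ∈ M, T = (adjoint m) ∘L b ∘L n} := by
  set S : Set (H →L[ℂ] H) :=
    {T : H →L[ℂ] H | ∃ m ∈ M, ∃ b ∈ B, ∃ n ∈ M, T = (adjoint m) ∘L b ∘L n} with hSdef
  set SB : Set (K →L[ℂ] K) := {T | ∃ m ∈ M, ∃ n ∈ M, ∃ b ∈ B, ∃ k ∈ M, ∃ l ∈ M,
      T = m ∘L (adjoint n) ∘L b ∘L k ∘L (adjoint l)} with hSBdef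
  set A' : Submodule ℂ (H →L[ℂ] H) := (Submodule.span ℂ S).topologicalClosure with hA'
  have hcsp : csp S = (A' : Set (H →L[ℂ] H)) := by
    simp [csp, hA', Submodule.topologicalClosure_coe]
  have hA'closed : IsClosed (A' : Set (H →L[ℂ] H)) := by
    rw [hA', Submodule.topologicalClosure_coe]; exact isClosed_closure
  have hSBsub : SB ⊆ (B : Set (K →L[ℂ] K)) := by
    intro x hx
    rw [hB]
    exact subset_closure (Submodule.subset_span hx)
  -- key: product of two generators lies in A'
  have key : ∀ t ∈ S, ∀ s ∈ S, t ∘L s ∈ A' := by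
    rintro t ⟨m, hm, b, hb, n, hn, rfl⟩ s ⟨k, hk, b', hb', l, hl, rfl⟩
    set c : K →L[ℂ] H := (adjoint m) ∘L b ∘L (n ∘L (adjoint k)) with hc
    set g : (K →L[ℂ] K) →L[ℂ] (H →L[ℂ] H) :=
      ((compL ℂ H K H).flip l).comp (compL ℂ K K H c) with hg
    have hgen : ∀ x ∈ SB, g x ∈ (A' : Set (H →L[ℂ] H)) := by
      rintro x ⟨m₁, hm₁, n₁, hn₁, b₁, hb₁, k₁, hk₁, l₁, hl₁, rfl⟩
      have hm₂ : n ∘L (adjoint k) ∘L m₁ ∈ M := hTRO n hn k hk m₁ hm₁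
      have hmid : b ∘L ((n ∘L (adjoint k) ∘L m₁) ∘L (adjoint n₁) ∘L b₁ ∘L k₁ ∘L (adjoint l₁))
          ∈ B := by
        refine hBmul b hb _ (hSBsub ?_)
        exact ⟨_, hm₂, n₁, hn₁, b₁, hb₁, k₁, hk₁, l₁, hl₁, rfl⟩
      have hmem : (adjoint m) ∘L
          (b ∘L ((n ∘L (adjoint k) ∘L m₁) ∘L (adjoint n₁) ∘L b₁ ∘L k₁ ∘L (adjoint l₁))) ∘L l
          ∈ S := ⟨m, hm, _, hmid, l, hl, rfl⟩
      have heq : g (m₁ ∘L (adjoint n₁) ∘L b₁ ∘L k₁ ∘L (adjoint l₁)) =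
          (adjoint m) ∘L
          (b ∘L ((n ∘L (adjoint k) ∘L m₁) ∘L (adjoint n₁) ∘L b₁ ∘L k₁ ∘L (adjoint l₁))) ∘L l := by
        simp only [hg, hc, comp_apply, flip_apply, compL_apply]
        ext v; rfl
      rw [heq]
      exact subset_closure (Submodule.subset_span hmem)
    have hspanB : ∀ x ∈ Submodule.span ℂ SB, g x ∈ A' := by
      intro x hx
      have : Submodule.span ℂ SB ≤ A'.comap (g : (K →L[ℂ] K) →ₗ[ℂ] (H →L[ℂ] H)) :=
        Submodule.span_le.2 (fun y hy => hgen y hy)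
      exact this hx
    have hclB : g b' ∈ A' := by
      have hcl : closure (Submodule.span ℂ SB : Set (K →L[ℂ] K)) ⊆
          (g : (K →L[ℂ] K) → (H →L[ℂ] H)) ⁻¹' (A' : Set (H →L[ℂ] H)) := by
        refine closure_minimal (fun y hy => hspanB y hy) ?_
        exact hA'closed.preimage g.continuous
      have hb'mem : b' ∈ closure (Submodule.span ℂ SB : Set (K →L[ℂ] K)) := by
        have hb'' : b' ∈ (B : Set (K →L[ℂ] K)) := hb'
        rw [hB] at hb''
        exact hb''
      exact hcl hb'mem
    have heq2 : ((adjoint m) ∘L b ∘L n) ∘L ((adjoint k) ∘L b' ∘L l) = g b' := by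
      simp only [hg, hc, comp_apply, flip_apply, compL_apply]
      ext v; rfl
    rw [heq2]; exact hclB
  -- extend to spans and closures in the first variable
  have step1 : ∀ s ∈ S, ∀ a ∈ (A' : Set (H →L[ℂ] H)), a ∘L s ∈ A' := by
    intro s hs
    have hspan : ∀ a ∈ Submodule.span ℂ S, a ∘L s ∈ A' := by
      intro a ha
      have : Submodule.span ℂ S ≤
          A'.comap (((compL ℂ H H H).flip s : (H →L[ℂ] H) →L[ℂ] (H →L[ℂ] H)) :
            (H →L[ℂ] H) →ₗ[ℂ] (H →L[ℂ] H)) :=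
        Submodule.span_le.2 (fun t ht => key t ht s hs)
      exact this ha
    intro a ha
    have hcl : closure (Submodule.span ℂ S : Set (H →L[ℂ] H)) ⊆
        (fun a => a ∘L s) ⁻¹' (A' : Set (H →L[ℂ] H)) := by
      refine closure_minimal (fun y hy => hspan y hy) ?_
      exact hA'closed.preimage ((compL ℂ H H H).flip s).continuous
    exact hcl ha
  -- second variable
  intro a₁ ha₁ a₂ ha₂
  rw [hcsp] at ha₁ ha₂ ⊢
  have hspan2 : ∀ a ∈ Submodule.span ℂ S, a₁ ∘L a ∈ A' := by
    intro a ha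
    have : Submodule.span ℂ S ≤
        A'.comap ((compL ℂ H H H a₁ : (H →L[ℂ] H) →L[ℂ] (H →L[ℂ] H)) :
          (H →L[ℂ] H) →ₗ[ℂ] (H →L[ℂ] H)) :=
      Submodule.span_le.2 (fun s hs => step1 s hs a₁ ha₁)
    exact this ha
  have hcl2 : closure (Submodule.span ℂ S : Set (H →L[ℂ] H)) ⊆
      (fun a => a₁ ∘L a) ⁻¹' (A' : Set (H →L[ℂ] H)) := by
    refine closure_minimal (fun y hy => hspan2 y hy) ?_
    exact hA'closed.preimage (compL ℂ H H H a₁).continuous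
  exact hcl2 ha₂
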